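/- arXiv:math/0603621 — 2 statements merged into one kernel-verified Lean document; each statement's English description precedes it below -/
import Mathlib

section
/- Let X be a uniformly discrete metric space with bounded geometry. Then there exist a connected graph Γ in which every vertex lies in at most three edges, and a map φ from X to the vertex set of Γ which is a uniform embedding with respect to the path (edge) metric on Γ. -/
open Metric

def UniformlyDiscrete (X : Type*) [MetricSpace X] : Prop :=
  ∃ δ > (0:ℝ), ∀ x y : X, x ≠ y → δ ≤ dist x y

def BoundedGeometry (X : Type*) [MetricSpace X] : Prop :=
  ∀ R > (0:ℝ), ∃ N : ℕ, ∀ x : X,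
    (closedBall x R).Finite ∧ (closedBall x R).ncard ≤ N

open Metric

namespace Stmt16Aux

variable {X : Type} [MetricSpace X]

def Hset (e : X → ℕ) (x y : X) : Set X :=
  {z | z ≠ x ∧ (dist x z < dist x y ∨ (dist x z = dist x y ∧ e z < e y))}

noncomputable def Hh (e : X → ℕ) (x y : X) : ℕ := (Hset e x y).ncard

lemma Hset_subset (e : X → ℕ) (x y : X) :
    Hset e x y ⊆ closedBall x (dist x y) := by
  rintro z ⟨-, h | ⟨h, -⟩⟩ <;>
    · simp only [mem_closedBall, dist_comm z x]; linarith

lemma Hh_lt (e : X → ℕ) (hfin : ∀ x y : X, (Hset e x y).Finite) {x y y' : X}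
    (hy : y ≠ x)
    (hkey : dist x y < dist x y' ∨ (dist x y = dist x y' ∧ e y < e y')) :
    Hh e x y < Hh e x y' := by
  apply Set.ncard_lt_ncard _ (hfin x y')
  constructor
  · rintro z ⟨hz, h | ⟨h1, h2⟩⟩
    · exact ⟨hz, Or.inl (by rcases hkey with h' | ⟨h', -⟩ <;> linarith)⟩
    · rcases hkey with h' | ⟨h', h2'⟩
      · exact ⟨hz, Or.inl (by linarith)⟩
      · exact ⟨hz, Or.inr ⟨by linarith, by omega⟩⟩
  · intro hsub
    have hmem : y ∈ Hset e x y' := by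
      refine ⟨hy, ?_⟩
      rcases hkey with h | ⟨h1, h2⟩
      exacts [Or.inl h, Or.inr ⟨h1, h2⟩]
    rcases hsub hmem with ⟨-, h | ⟨-, h⟩⟩
    · exact absurd h (lt_irrefl _)
    · omega

lemma Hh_injOn (e : X → ℕ) (he : Function.Injective e)
    (hfin : ∀ x y : X, (Hset e x y).Finite) {x y y' : X}
    (hy : y ≠ x) (hy' : y' ≠ x) (h : Hh e x y = Hh e x y') : y = y' := by
  by_contra hne
  rcases lt_trichotomy (dist x y) (dist x y') with hd | hd | hd
  · exact absurd h (Nat.ne_of_lt (Hh_lt e hfin hy (Or.inl hd)))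
  · rcases lt_trichotomy (e y) (e y') with he' | he' | he'
    · exact absurd h (Nat.ne_of_lt (Hh_lt e hfin hy (Or.inr ⟨hd, he'⟩)))
    · exact hne (he he')
    · exact absurd h (Nat.ne_of_gt (Hh_lt e hfin hy' (Or.inr ⟨hd.symm, he'⟩)))
  · exact absurd h (Nat.ne_of_gt (Hh_lt e hfin hy' (Or.inl hd)))

noncomputable def mceil (x y : X) : ℕ := ⌈dist x y⌉₊

abbrev PairT (e : X → ℕ) : Type := {p : X × X // e p.1 < e p.2}

abbrev ConnT (e : X → ℕ) : Type :=
  {q : PairT e × ℕ // 1 ≤ q.2 ∧ q.2 ≤ mceil q.1.1.1 q.1.1.2}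

abbrev VT (e : X → ℕ) : Type := (X × ℕ) ⊕ ConnT e

def rel (e : X → ℕ) : VT e → VT e → Prop
  | Sum.inl (u, k), Sum.inl (u', k') => u' = u ∧ k' = k + 1
  | Sum.inl (u, k), Sum.inr q =>
      (q.1.1.1.1 = u ∧ Hh e u q.1.1.1.2 = k ∧ q.1.2 = 1) ∨
      (q.1.1.1.2 = u ∧ Hh e u q.1.1.1.1 = k ∧ q.1.2 = mceil q.1.1.1.1 q.1.1.1.2)
  | Sum.inr q, Sum.inr q' => q'.1.1 = q.1.1 ∧ q'.1.2 = q.1.2 + 1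
  | Sum.inr _, Sum.inl _ => False

noncomputable def Gr (e : X → ℕ) : SimpleGraph (VT e) := SimpleGraph.fromRel (rel e)

-- adjacency helpers
lemma adj_ray (e : X → ℕ) (u : X) (k : ℕ) :
    (Gr e).Adj (Sum.inl (u, k)) (Sum.inl (u, k + 1)) := by
  rw [Gr, SimpleGraph.fromRel_adj]
  refine ⟨?_, Or.inl ⟨rfl, rfl⟩⟩
  intro h
  have := congrArg Prod.snd (Sum.inl.inj h)
  omega

lemma adj_conn_first (e : X → ℕ) (u v : X) (huv : e u < e v)
    (h2 : 1 ≤ mceil u v) :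
    (Gr e).Adj (Sum.inl (u, Hh e u v)) (Sum.inr ⟨(⟨(u, v), huv⟩, 1), ⟨le_rfl, h2⟩⟩) := by
  rw [Gr, SimpleGraph.fromRel_adj]
  exact ⟨by simp, Or.inl (Or.inl ⟨rfl, rfl, rfl⟩)⟩

lemma adj_conn_last (e : X → ℕ) (u v : X) (huv : e u < e v) (h2 : 1 ≤ mceil u v) :
    (Gr e).Adj (Sum.inl (v, Hh e v u)) (Sum.inr ⟨(⟨(u, v), huv⟩, mceil u v), ⟨h2, le_rfl⟩⟩) := by
  rw [Gr, SimpleGraph.fromRel_adj]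
  exact ⟨by simp, Or.inl (Or.inr ⟨rfl, rfl, rfl⟩)⟩

lemma adj_conn_step (e : X → ℕ) (p : PairT e) (j : ℕ) (h1 : 1 ≤ j ∧ j ≤ mceil p.1.1 p.1.2)
    (h2 : 1 ≤ j + 1 ∧ j + 1 ≤ mceil p.1.1 p.1.2) :
    (Gr e).Adj (Sum.inr ⟨(p, j), h1⟩) (Sum.inr ⟨(p, j + 1), h2⟩) := by
  rw [Gr, SimpleGraph.fromRel_adj]
  refine ⟨?_, Or.inl ⟨rfl, rfl⟩⟩
  intro h
  have h' : j = j + 1 := congrArg (fun z => z.1.2) (Sum.inr.inj h)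
  omega

-- walks
lemma ray_walk (e : X → ℕ) (u : X) (k : ℕ) :
    ∃ w : (Gr e).Walk (Sum.inl (u, 0)) (Sum.inl (u, k)), w.length = k := by
  induction k with
  | zero => exact ⟨SimpleGraph.Walk.nil, rfl⟩
  | succ n ih =>
    obtain ⟨w, hw⟩ := ih
    exact ⟨w.concat (adj_ray e u n), by simp [SimpleGraph.Walk.length_concat, hw]⟩

lemma conn_walk (e : X → ℕ) (u v : X) (huv : e u < e v) :
    ∀ j (hj : 1 ≤ j) (hj2 : j ≤ mceil u v),
      ∃ w : (Gr e).Walk (Sum.inl (u, Hh e u v)) (Sum.inr ⟨(⟨(u, v), huv⟩, j), ⟨hj, hj2⟩⟩),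
        w.length = j := by
  intro j
  induction j with
  | zero => omega
  | succ n ih =>
    intro hj hj2
    by_cases hn : n = 0
    · subst hn
      exact ⟨SimpleGraph.Walk.cons (adj_conn_first e u v huv hj2) SimpleGraph.Walk.nil, rfl⟩
    · obtain ⟨w, hw⟩ := ih (by omega) (by omega)
      exact ⟨w.concat (adj_conn_step e ⟨(u, v), huv⟩ n (⟨by omega, by omega⟩ : 1 ≤ n ∧ n ≤ mceil u v)
          (⟨hj, hj2⟩ : 1 ≤ n + 1 ∧ n + 1 ≤ mceil u v)),
        by simp [SimpleGraph.Walk.length_concat, hw]⟩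

lemma phi_walk (e : X → ℕ) (u v : X) (huv : e u < e v) :
    ∃ w : (Gr e).Walk (Sum.inl (u, 0)) (Sum.inl (v, 0)),
      w.length = Hh e u v + mceil u v + 1 + Hh e v u := by
  have hne : u ≠ v := fun h => by subst h; exact lt_irrefl _ huv
  have hm : 1 ≤ mceil u v := Nat.ceil_pos.mpr (dist_pos.mpr hne)
  obtain ⟨w1, h1⟩ := ray_walk e u (Hh e u v)
  obtain ⟨w2, h2⟩ := conn_walk e u v huv (mceil u v) hm le_rfl
  obtain ⟨w3, h3⟩ := ray_walk e v (Hh e v u)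
  refine ⟨w1.append (w2.append ((SimpleGraph.Walk.cons
    ((adj_conn_last e u v huv hm).symm) w3.reverse))), ?_⟩
  have hkey : mceil (((⟨(u, v), huv⟩ : PairT e) : X × X)).1 (((⟨(u, v), huv⟩ : PairT e) : X × X)).2
      = mceil u v := rfl
  simp [SimpleGraph.Walk.length_append, SimpleGraph.Walk.length_cons,
    SimpleGraph.Walk.length_reverse, h1, h2, h3, hkey]
  omega

noncomputable def fpot (e : X → ℕ) (x : X) : VT e → ℝ
  | Sum.inl (u, _) => dist x u
  | Sum.inr q => min (dist x q.1.1.1.1 + q.1.2)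
      (dist x q.1.1.1.2 + ((mceil q.1.1.1.1 q.1.1.1.2 : ℝ) + 1 - q.1.2))

lemma fpot_rel (e : X → ℕ) (x : X) {a b : VT e} (h : rel e a b) :
    |fpot e x a - fpot e x b| ≤ 1 := by
  rcases a with ⟨u, k⟩ | ⟨⟨⟨⟨u, v⟩, huv⟩, j⟩, hj⟩ <;>
    rcases b with ⟨u', k'⟩ | ⟨⟨⟨⟨u', v'⟩, huv'⟩, j'⟩, hj'⟩
  · obtain ⟨rfl, -⟩ := h
    simp [fpot]
  · replace h : (u' = u ∧ Hh e u v' = k ∧ j' = 1) ∨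
        (v' = u ∧ Hh e u u' = k ∧ j' = mceil u' v') := h
    show |dist x u - min (dist x u' + (j' : ℝ))
        (dist x v' + ((mceil u' v' : ℝ) + 1 - (j' : ℝ)))| ≤ 1
    have hc : dist u' v' ≤ (mceil u' v' : ℝ) := Nat.le_ceil _
    have t1 := dist_triangle x u' v'
    have t2 := dist_triangle x v' u'
    rw [dist_comm v' u'] at t2
    rcases h with ⟨h1, -, rfl⟩ | ⟨h1, -, rfl⟩ <;> subst h1 <;> rw [abs_le] <;> constructor
    · have h1 := min_le_left (dist x u' + ((1 : ℕ) : ℝ))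
        (dist x v' + ((mceil u' v' : ℝ) + 1 - ((1 : ℕ) : ℝ)))
      push_cast at *
      linarith
    · have h1 : dist x u' - 1 ≤ min (dist x u' + ((1 : ℕ) : ℝ))
          (dist x v' + ((mceil u' v' : ℝ) + 1 - ((1 : ℕ) : ℝ))) :=
        le_min (by push_cast; linarith) (by push_cast; linarith)
      push_cast at *
      linarith
    · have h1 := min_le_right (dist x u' + ((mceil u' v' : ℕ) : ℝ))
        (dist x v' + ((mceil u' v' : ℝ) + 1 - ((mceil u' v' : ℕ) : ℝ)))
      push_cast at *
      linarith
    · have h1 : dist x v' - 1 ≤ min (dist x u' + ((mceil u' v' : ℕ) : ℝ))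
          (dist x v' + ((mceil u' v' : ℝ) + 1 - ((mceil u' v' : ℕ) : ℝ))) :=
        le_min (by push_cast; linarith) (by push_cast; linarith)
      push_cast at *
      linarith
  · exact h.elim
  · replace h : (⟨(u', v'), huv'⟩ : PairT e) = ⟨(u, v), huv⟩ ∧ j' = j + 1 := h
    obtain ⟨h1, rfl⟩ := h
    have hu : u' = u := congrArg (fun p : PairT e => p.1.1) h1
    have hv : v' = v := congrArg (fun p : PairT e => p.1.2) h1
    subst hu; subst hv
    show |min (dist x u' + (j : ℝ))
        (dist x v' + ((mceil u' v' : ℝ) + 1 - (j : ℝ))) -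
      min (dist x u' + ((j + 1 : ℕ) : ℝ))
        (dist x v' + ((mceil u' v' : ℝ) + 1 - ((j + 1 : ℕ) : ℝ)))| ≤ 1
    push_cast
    set A := dist x u'
    set B := dist x v'
    set M := (mceil u' v' : ℝ)
    have l1 := min_le_left (A + (j : ℝ)) (B + (M + 1 - (j : ℝ)))
    have l2 := min_le_right (A + (j : ℝ)) (B + (M + 1 - (j : ℝ)))
    have l3 := min_le_left (A + ((j : ℝ) + 1)) (B + (M + 1 - ((j : ℝ) + 1)))
    have l4 := min_le_right (A + ((j : ℝ) + 1)) (B + (M + 1 - ((j : ℝ) + 1)))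
    have g1 : min (A + (j : ℝ)) (B + (M + 1 - (j : ℝ))) - 1 ≤
        min (A + ((j : ℝ) + 1)) (B + (M + 1 - ((j : ℝ) + 1))) :=
      le_min (by linarith) (by linarith)
    have g2 : min (A + ((j : ℝ) + 1)) (B + (M + 1 - ((j : ℝ) + 1))) - 1 ≤
        min (A + (j : ℝ)) (B + (M + 1 - (j : ℝ))) :=
      le_min (by linarith) (by linarith)
    rw [abs_le]
    constructor <;> linarith

lemma fpot_adj (e : X → ℕ) (x : X) {a b : VT e} (h : (Gr e).Adj a b) :
    |fpot e x a - fpot e x b| ≤ 1 := by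
  rw [Gr, SimpleGraph.fromRel_adj] at h
  rcases h with ⟨-, h | h⟩
  · exact fpot_rel e x h
  · rw [abs_sub_comm]; exact fpot_rel e x h

lemma abs_le_walk {V : Type} {G : SimpleGraph V} (f : V → ℝ)
    (hf : ∀ a b : V, G.Adj a b → |f a - f b| ≤ 1) {a b : V} (p : G.Walk a b) :
    |f a - f b| ≤ p.length := by
  induction p with
  | nil => simp
  | @cons a c b h q ih =>
    have h1 := hf _ _ h
    have h2 := abs_sub_le (f a) (f c) (f b)
    simp only [SimpleGraph.Walk.length_cons]
    push_cast
    linarith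

lemma dist_le_graphdist (e : X → ℕ) (x y : X)
    (hreach : (Gr e).Reachable (Sum.inl (x, 0)) (Sum.inl (y, 0))) :
    dist x y ≤ ((Gr e).dist (Sum.inl (x, 0)) (Sum.inl (y, 0)) : ℝ) := by
  obtain ⟨p, hp⟩ := hreach.exists_walk_length_eq_dist
  have := abs_le_walk (fpot e x) (fun a b hab => fpot_adj e x hab) p
  rw [hp] at this
  have hx : fpot e x (Sum.inl (x, 0)) = 0 := by simp [fpot]
  have hy : fpot e x (Sum.inl (y, 0)) = dist x y := by simp [fpot]
  rw [hx, hy] at this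
  rw [abs_sub_comm, sub_zero] at this
  rwa [abs_of_nonneg dist_nonneg] at this

lemma reach_base (e : X → ℕ) (a : VT e) :
    ∃ x : X, (Gr e).Reachable a (Sum.inl (x, 0)) := by
  rcases a with ⟨u, k⟩ | ⟨⟨⟨⟨u, v⟩, huv⟩, j⟩, hj⟩
  · exact ⟨u, ((ray_walk e u k).choose.reverse.reachable)⟩
  · obtain ⟨hj1, hj2⟩ := hj
    refine ⟨u, ?_⟩
    have r1 := ((conn_walk e u v huv j hj1 hj2).choose.reachable).symm
    have r2 := ((ray_walk e u (Hh e u v)).choose.reverse.reachable)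
    exact r1.trans r2

lemma reach_phi (e : X → ℕ) (he : Function.Injective e) (x y : X) :
    (Gr e).Reachable (Sum.inl (x, 0)) (Sum.inl (y, 0)) := by
  by_cases hxy : x = y
  · subst hxy; rfl
  · rcases (he.ne hxy).lt_or_gt with h | h
    · exact (phi_walk e x y h).choose.reachable
    · exact ((phi_walk e y x h).choose.reachable).symm

lemma gr_preconnected (e : X → ℕ) (he : Function.Injective e) :
    (Gr e).Preconnected := by
  intro a b
  obtain ⟨x, hx⟩ := reach_base e a
  obtain ⟨y, hy⟩ := reach_base e b
  exact (hx.trans (reach_phi e he x y)).trans hy.symm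

lemma graphdist_le (e : X → ℕ) (he : Function.Injective e) (x y : X) (hxy : x ≠ y) :
    (Gr e).dist (Sum.inl (x, 0)) (Sum.inl (y, 0)) ≤
      Hh e x y + Hh e y x + mceil x y + 1 := by
  have hmc : mceil y x = mceil x y := by simp [mceil, dist_comm]
  rcases (he.ne hxy).lt_or_gt with h | h
  · obtain ⟨w, hw⟩ := phi_walk e x y h
    have := SimpleGraph.dist_le w
    omega
  · obtain ⟨w, hw⟩ := phi_walk e y x h
    have := SimpleGraph.dist_le w
    rw [SimpleGraph.dist_comm] at this
    omega

lemma conn_nbr_unique (e : X → ℕ) (he : Function.Injective e)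
    (hfin : ∀ x y : X, (Hset e x y).Finite) (u : X) (k : ℕ)
    {q q' : ConnT e} (h : (Gr e).Adj (Sum.inl (u, k)) (Sum.inr q))
    (h' : (Gr e).Adj (Sum.inl (u, k)) (Sum.inr q')) : q = q' := by
  rw [Gr, SimpleGraph.fromRel_adj] at h h'
  obtain ⟨-, h⟩ := h
  obtain ⟨-, h'⟩ := h'
  replace h : rel e (Sum.inl (u, k)) (Sum.inr q) := by
    rcases h with h | h
    exacts [h, h.elim]
  replace h' : rel e (Sum.inl (u, k)) (Sum.inr q') := by
    rcases h' with h' | h'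
    exacts [h', h'.elim]
  obtain ⟨⟨⟨⟨a, b⟩, hab⟩, j⟩, hj⟩ := q
  obtain ⟨⟨⟨⟨a', b'⟩, hab'⟩, j'⟩, hj'⟩ := q'
  replace h : (a = u ∧ Hh e u b = k ∧ j = 1) ∨
      (b = u ∧ Hh e u a = k ∧ j = mceil a b) := h
  replace h' : (a' = u ∧ Hh e u b' = k ∧ j' = 1) ∨
      (b' = u ∧ Hh e u a' = k ∧ j' = mceil a' b') := h'
  have hab2 : e a < e b := hab
  have hab2' : e a' < e b' := hab'
  rcases h with ⟨ha, hk, hj1⟩ | ⟨ha, hk, hj1⟩ <;>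
    rcases h' with ⟨ha', hk', hj1'⟩ | ⟨ha', hk', hj1'⟩
  · have hbne : b ≠ u := by
      intro hbu; rw [ha, hbu] at hab2; exact lt_irrefl _ hab2
    have hbne' : b' ≠ u := by
      intro hbu; rw [ha', hbu] at hab2'; exact lt_irrefl _ hab2'
    have hbb' : b = b' := Hh_injOn e he hfin hbne hbne' (hk.trans hk'.symm)
    subst ha; subst ha'; subst hbb'; subst hj1; subst hj1'
    rfl
  · have hbne : b ≠ u := by
      intro hbu; rw [ha, hbu] at hab2; exact lt_irrefl _ hab2
    have hane' : a' ≠ u := by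
      intro hau; rw [ha', hau] at hab2'; exact lt_irrefl _ hab2'
    have hba' : b = a' := Hh_injOn e he hfin hbne hane' (hk.trans hk'.symm)
    rw [ha] at hab2
    rw [ha'] at hab2'
    rw [hba'] at hab2
    exact absurd (hab2.trans hab2') (lt_irrefl _)
  · have hane : a ≠ u := by
      intro hau; rw [ha, hau] at hab2; exact lt_irrefl _ hab2
    have hbne' : b' ≠ u := by
      intro hbu; rw [ha', hbu] at hab2'; exact lt_irrefl _ hab2'
    have hab'' : a = b' := Hh_injOn e he hfin hane hbne' (hk.trans hk'.symm)
    rw [ha] at hab2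
    rw [ha'] at hab2'
    rw [hab''] at hab2
    exact absurd (hab2'.trans hab2) (lt_irrefl _)
  · have hane : a ≠ u := by
      intro hau; rw [ha, hau] at hab2; exact lt_irrefl _ hab2
    have hane' : a' ≠ u := by
      intro hau; rw [ha', hau] at hab2'; exact lt_irrefl _ hab2'
    have haa' : a = a' := Hh_injOn e he hfin hane hane' (hk.trans hk'.symm)
    subst ha; subst ha'; subst haa'; subst hj1; subst hj1'
    rfl

lemma nbr_sub (e : X → ℕ) (he : Function.Injective e)
    (hfin : ∀ x y : X, (Hset e x y).Finite) (v : VT e) :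
    ∃ a b c : VT e, (Gr e).neighborSet v ⊆ {a, b, c} := by
  classical
  rcases v with ⟨u, k⟩ | ⟨⟨⟨⟨u, w⟩, huw⟩, j⟩, hj⟩
  · refine ⟨Sum.inl (u, k + 1), Sum.inl (u, k - 1),
      if hE : ∃ q : ConnT e, (Gr e).Adj (Sum.inl (u, k)) (Sum.inr q)
        then Sum.inr hE.choose else Sum.inl (u, k + 1), ?_⟩
    intro z hz
    have hadj : (Gr e).Adj (Sum.inl (u, k)) z := hz
    rw [SimpleGraph.mem_neighborSet, Gr, SimpleGraph.fromRel_adj] at hz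
    obtain ⟨hne, hr⟩ := hz
    simp only [Set.mem_insert_iff, Set.mem_singleton_iff]
    rcases z with ⟨u', k'⟩ | q
    · rcases hr with h | h
      · replace h : u' = u ∧ k' = k + 1 := h
        obtain ⟨rfl, rfl⟩ := h
        exact Or.inl rfl
      · replace h : u = u' ∧ k = k' + 1 := h
        obtain ⟨rfl, hk⟩ := h
        refine Or.inr (Or.inl ?_)
        have : k' = k - 1 := by omega
        rw [this]
    · refine Or.inr (Or.inr ?_)
      rw [dif_pos (⟨q, hadj⟩ : ∃ q : ConnT e, (Gr e).Adj (Sum.inl (u, k)) (Sum.inr q))]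
      have hspec := (⟨q, hadj⟩ : ∃ q : ConnT e,
        (Gr e).Adj (Sum.inl (u, k)) (Sum.inr q)).choose_spec
      exact congrArg Sum.inr (conn_nbr_unique e he hfin u k hadj hspec)
  · replace hj : 1 ≤ j ∧ j ≤ mceil u w := hj
    refine ⟨if h : j + 1 ≤ mceil u w
        then Sum.inr ⟨(⟨(u, w), huw⟩, j + 1), (⟨by omega, h⟩ : 1 ≤ j + 1 ∧ j + 1 ≤ mceil u w)⟩
        else Sum.inl (u, Hh e u w),
      if h : 2 ≤ j
        then Sum.inr ⟨(⟨(u, w), huw⟩, j - 1), (⟨by omega, by omega⟩ : 1 ≤ j - 1 ∧ j - 1 ≤ mceil u w)⟩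
        else Sum.inl (u, Hh e u w),
      Sum.inl (w, Hh e w u), ?_⟩
    intro z hz
    rw [SimpleGraph.mem_neighborSet, Gr, SimpleGraph.fromRel_adj] at hz
    obtain ⟨hne, hr⟩ := hz
    simp only [Set.mem_insert_iff, Set.mem_singleton_iff]
    rcases z with ⟨u', k'⟩ | ⟨⟨⟨⟨a, b⟩, hab⟩, j'⟩, hj2⟩
    · rcases hr with h | h
      · exact h.elim
      · replace h : (u = u' ∧ Hh e u' w = k' ∧ j = 1) ∨
            (w = u' ∧ Hh e u' u = k' ∧ j = mceil u w) := h
        rcases h with ⟨rfl, rfl, hj1⟩ | ⟨rfl, rfl, hj1⟩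
        · refine Or.inr (Or.inl ?_)
          rw [dif_neg (by omega)]
        · exact Or.inr (Or.inr rfl)
    · replace hj2 : 1 ≤ j' ∧ j' ≤ mceil a b := hj2
      rcases hr with h | h
      · replace h : (⟨(a, b), hab⟩ : PairT e) = ⟨(u, w), huw⟩ ∧ j' = j + 1 := h
        obtain ⟨h1, rfl⟩ := h
        have hua : a = u := congrArg (fun p : PairT e => p.1.1) h1
        have hwb : b = w := congrArg (fun p : PairT e => p.1.2) h1
        subst hua; subst hwb
        refine Or.inl ?_
        rw [dif_pos (by omega : j + 1 ≤ mceil a b)]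
      · replace h : (⟨(u, w), huw⟩ : PairT e) = ⟨(a, b), hab⟩ ∧ j = j' + 1 := h
        obtain ⟨h1, hj3⟩ := h
        have hua : u = a := congrArg (fun p : PairT e => p.1.1) h1
        have hwb : w = b := congrArg (fun p : PairT e => p.1.2) h1
        subst hua; subst hwb
        refine Or.inr (Or.inl ?_)
        rw [dif_pos (by omega : 2 ≤ j)]
        have : j' = j - 1 := by omega
        subst this
        rfl

lemma deg_le3 (e : X → ℕ) (he : Function.Injective e)
    (hfin : ∀ x y : X, (Hset e x y).Finite) (v : VT e) :
    ((Gr e).neighborSet v).Finite ∧ ((Gr e).neighborSet v).ncard ≤ 3 := by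
  obtain ⟨a, b, c, hsub⟩ := nbr_sub e he hfin v
  have hfinT : ({a, b, c} : Set (VT e)).Finite :=
    ((Set.finite_singleton c).insert b).insert a
  refine ⟨hfinT.subset hsub, (Set.ncard_le_ncard hsub hfinT).trans ?_⟩
  have h1 : ({c} : Set (VT e)).ncard = 1 := Set.ncard_singleton c
  have h2 := Set.ncard_insert_le b ({c} : Set (VT e))
  have h3 := Set.ncard_insert_le a ({b, c} : Set (VT e))
  omega

end Stmt16Aux

open Stmt16Aux in
theorem stmt16 (X : Type) [MetricSpace X]
    (hud : UniformlyDiscrete X) (hbg : BoundedGeometry X) :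
    ∃ (V : Type) (Γ : SimpleGraph V), Γ.Connected ∧
      -- every vertex lies in at most three edges
      (∀ v : V, (Γ.neighborSet v).Finite ∧ (Γ.neighborSet v).ncard ≤ 3) ∧
      -- `φ` is a uniform embedding of `X` into the vertices of `Γ` with the
      -- path (edge) metric `Γ.dist`
      ∃ φ : X → V,
        (∀ R > (0:ℝ), ∃ S > (0:ℝ), ∀ x y : X,
          dist x y ≤ R → (Γ.dist (φ x) (φ y) : ℝ) ≤ S) ∧
        (∀ R > (0:ℝ), ∃ S > (0:ℝ), ∀ x y : X,
          (Γ.dist (φ x) (φ y) : ℝ) ≤ R → dist x y ≤ S) := by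
  classical
  by_cases hX : Nonempty X
  · obtain ⟨x0⟩ := hX
    have hcount : Countable X := by
      have hU : (Set.univ : Set X) ⊆ ⋃ n : ℕ, closedBall x0 ((n : ℝ) + 1) := by
        intro x _
        obtain ⟨n, hn⟩ := exists_nat_ge (dist x x0)
        exact Set.mem_iUnion.2 ⟨n, by simp only [mem_closedBall]; linarith⟩
      have hcu : (Set.univ : Set X).Countable :=
        Set.Countable.mono hU (Set.countable_iUnion fun n =>
          (((hbg ((n : ℝ) + 1) (by positivity)).choose_spec x0).1).countable)
      exact Set.countable_univ_iff.mp hcu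
    obtain ⟨e, he⟩ := exists_injective_nat X
    have hfin : ∀ x y : X, (Hset e x y).Finite := by
      intro x y
      obtain ⟨N, hN⟩ := hbg (dist x y + 1) (by positivity)
      exact (hN x).1.subset ((Hset_subset e x y).trans
        (closedBall_subset_closedBall (by linarith)))
    refine ⟨VT e, Gr e, ?_, deg_le3 e he hfin,
      fun x => Sum.inl (x, 0), ?_, ?_⟩
    · rw [SimpleGraph.connected_iff]
      exact ⟨gr_preconnected e he, ⟨Sum.inl (x0, 0)⟩⟩
    · intro R hR
      obtain ⟨N, hN⟩ := hbg R hR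
      refine ⟨2 * N + R + 2, by positivity, fun x y hxy => ?_⟩
      by_cases hxy' : x = y
      · subst hxy'
        simp only [SimpleGraph.dist_self, Nat.cast_zero]
        positivity
      · have hb := graphdist_le e he x y hxy'
        have hH1 : Hh e x y ≤ N := by
          refine le_trans (Set.ncard_le_ncard ?_ (hN x).1) (hN x).2
          exact (Hset_subset e x y).trans (closedBall_subset_closedBall hxy)
        have hH2 : Hh e y x ≤ N := by
          refine le_trans (Set.ncard_le_ncard ?_ (hN y).1) (hN y).2
          exact (Hset_subset e y x).trans
            (closedBall_subset_closedBall (by rwa [dist_comm]))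
        have hm : (mceil x y : ℝ) < dist x y + 1 :=
          Nat.ceil_lt_add_one dist_nonneg
        have hcast : (((Gr e).dist (Sum.inl (x, 0)) (Sum.inl (y, 0)) : ℕ) : ℝ)
            ≤ (Hh e x y : ℝ) + (Hh e y x : ℝ) + (mceil x y : ℝ) + 1 := by
          exact_mod_cast hb
        have hN1 : (Hh e x y : ℝ) ≤ N := by exact_mod_cast hH1
        have hN2 : (Hh e y x : ℝ) ≤ N := by exact_mod_cast hH2
        linarith
    · intro R hR
      refine ⟨R, hR, fun x y h => ?_⟩
      exact le_trans (dist_le_graphdist e x y (gr_preconnected e he _ _)) h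
  · refine ⟨Unit, ⊥, ?_, ?_, fun x => (hX ⟨x⟩).elim, ?_, ?_⟩
    · rw [SimpleGraph.connected_iff]
      exact ⟨fun a b => by rw [Subsingleton.elim a b], ⟨()⟩⟩
    · intro v
      constructor
      · exact Set.finite_empty.subset (fun w hw => (hw : (⊥ : SimpleGraph Unit).Adj v w).elim)
      · have : (⊥ : SimpleGraph Unit).neighborSet v = ∅ :=
          Set.eq_empty_iff_forall_notMem.2 fun w hw => (hw : (⊥ : SimpleGraph Unit).Adj v w).elim
        simp [this]
    · exact fun R hR => ⟨1, one_pos, fun x => (hX ⟨x⟩).elim⟩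
    · exact fun R hR => ⟨1, one_pos, fun x => (hX ⟨x⟩).elim⟩
end

section
/- The following are equivalent: (i) for every uniformly discrete metric space X with bounded geometry there exists a countable discrete group G_X with a proper left-invariant metric such that X admits a uniform embedding into G_X; (ii) there exists a single countable discrete group G with a proper left-invariant metric such that every uniformly discrete metric space with bounded geometry admits a uniform embedding into G. -/
open Metric

def IsUniformEmbeddingMap {X Y : Type*} [MetricSpace X] [MetricSpace Y]
    (f : X → Y) : Prop :=
  (∀ R > (0:ℝ), ∃ S > (0:ℝ), ∀ x y : X, dist x y ≤ R → dist (f x) (f y) ≤ S) ∧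
  (∀ R > (0:ℝ), ∃ S > (0:ℝ), ∀ x y : X, dist (f x) (f y) ≤ R → dist x y ≤ S)

/-- A countable discrete group with a proper left-invariant metric. -/
def ProperLeftInvariantMetricGroup (G : Type*) [Group G] [MetricSpace G] : Prop :=
  Countable G ∧
  (∀ g x y : G, dist (g * x) (g * y) = dist x y) ∧
  (∀ (x : G) (r : ℝ), (closedBall x r).Finite)

namespace Stmt18Aux

open Set

/-- The universal growth bound. -/
def gamma0 (m : ℕ) : ℕ := (m+2)^(m+2)

lemma gamma0_mono : Monotone gamma0 := by
  intro a b h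
  calc (a+2)^(a+2) ≤ (b+2)^(a+2) := Nat.pow_le_pow_left (by omega) _
    _ ≤ (b+2)^(b+2) := Nat.pow_le_pow_right (by omega) (by omega)

/-! ### Walks and chain metrics -/

variable {X : Type}

/-- cost of a walk starting at `x` visiting the points of `L` in order. -/
def walkCost (c : X → X → ℕ) : X → List X → ℕ
  | _, [] => 0
  | x, y :: t => c x y + walkCost c y t

lemma walkCost_append (c : X → X → ℕ) (x : X) (A B : List X) :
    walkCost c x (A ++ B) = walkCost c x A + walkCost c (A.getLastD x) B := by
  induction A generalizing x with
  | nil => simp [walkCost]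
  | cons y t ih =>
      rw [List.cons_append, walkCost, walkCost, ih y, List.getLastD_cons, Nat.add_assoc]

lemma getLastD_append' (x : X) (A B : List X) :
    (A ++ B).getLastD x = B.getLastD (A.getLastD x) := by
  induction A generalizing x with
  | nil => simp
  | cons y t ih => rw [List.cons_append, List.getLastD_cons, List.getLastD_cons, ih y]

/-- The chain (pseudo-)distance associated to a cost function. -/
noncomputable def chainD (c : X → X → ℕ) (x y : X) : ℕ :=
  sInf {n | ∃ L : List X, L.getLastD x = y ∧ walkCost c x L = n}

lemma chainD_set_nonempty (c : X → X → ℕ) (x y : X) :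
    {n | ∃ L : List X, L.getLastD x = y ∧ walkCost c x L = n}.Nonempty :=
  ⟨walkCost c x [y], [y], rfl, rfl⟩

lemma chainD_exists_walk (c : X → X → ℕ) (x y : X) :
    ∃ L : List X, L.getLastD x = y ∧ walkCost c x L = chainD c x y :=
  Nat.sInf_mem (chainD_set_nonempty c x y)

lemma chainD_le (c : X → X → ℕ) {x y : X} {L : List X} (h : L.getLastD x = y) :
    chainD c x y ≤ walkCost c x L :=
  Nat.sInf_le ⟨L, h, rfl⟩

lemma chainD_self (c : X → X → ℕ) (x : X) : chainD c x x = 0 :=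
  Nat.le_zero.1 (chainD_le c (L := []) rfl)

lemma chainD_triangle (c : X → X → ℕ) (x y z : X) :
    chainD c x z ≤ chainD c x y + chainD c y z := by
  obtain ⟨L₁, h₁, e₁⟩ := chainD_exists_walk c x y
  obtain ⟨L₂, h₂, e₂⟩ := chainD_exists_walk c y z
  have hend : (L₁ ++ L₂).getLastD x = z := by
    rw [getLastD_append', h₁, h₂]
  calc chainD c x z ≤ walkCost c x (L₁ ++ L₂) := chainD_le c hend
    _ = walkCost c x L₁ + walkCost c (L₁.getLastD x) L₂ := walkCost_append c x L₁ L₂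
    _ = chainD c x y + chainD c y z := by rw [e₁, h₁, e₂]

lemma exists_reverse_walk (c : X → X → ℕ) (hc : ∀ a b, c a b = c b a) :
    ∀ (L : List X) (x : X), ∃ L' : List X,
      L'.getLastD (L.getLastD x) = x ∧ walkCost c (L.getLastD x) L' = walkCost c x L := by
  intro L
  induction L with
  | nil => exact fun x => ⟨[], rfl, rfl⟩
  | cons y t ih =>
      intro x
      obtain ⟨L', hL', hcost⟩ := ih y
      refine ⟨L' ++ [x], ?_, ?_⟩
      · rw [List.getLastD_cons, List.getLastD_concat]
      · rw [List.getLastD_cons, walkCost_append, hcost, hL']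
        simp [walkCost, hc y x, Nat.add_comm]

lemma chainD_symm_le (c : X → X → ℕ) (hc : ∀ a b, c a b = c b a) (x y : X) :
    chainD c y x ≤ chainD c x y := by
  obtain ⟨L, hL, hcost⟩ := chainD_exists_walk c x y
  obtain ⟨L', hL', hcost'⟩ := exists_reverse_walk c hc L x
  rw [hL] at hL' hcost'
  rw [← hcost, ← hcost']
  exact chainD_le c hL'

lemma chainD_symm (c : X → X → ℕ) (hc : ∀ a b, c a b = c b a) (x y : X) :
    chainD c x y = chainD c y x :=
  le_antisymm (chainD_symm_le c hc y x) (chainD_symm_le c hc x y)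

lemma chainD_pos (c : X → X → ℕ) (hc1 : ∀ a b, 1 ≤ c a b) {x y : X} (h : x ≠ y) :
    1 ≤ chainD c x y := by
  obtain ⟨L, hL, hcost⟩ := chainD_exists_walk c x y
  cases L with
  | nil => simp at hL; exact absurd hL h
  | cons a t =>
      rw [← hcost]
      calc 1 ≤ c x a := hc1 x a
        _ ≤ walkCost c x (a :: t) := by simp [walkCost]

/-! ### The normalization lemma (Lemma A) -/

lemma length_le_walkCost (c : X → X → ℕ) (hc1 : ∀ a b, 1 ≤ c a b) :
    ∀ (L : List X) (x : X), L.length ≤ walkCost c x L := by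
  intro L
  induction L with
  | nil => simp [walkCost]
  | cons y t ih =>
      intro x
      have := ih y
      have := hc1 x y
      simp only [walkCost, List.length_cons]
      omega

/-- reachability sets -/
def reachSet (c : X → X → ℕ) (m : ℕ) (x : X) : ℕ → Set X
  | 0 => {x}
  | j+1 => reachSet c m x j ∪ {q | ∃ p ∈ reachSet c m x j, c p q ≤ m}

lemma reachSet_mono (c : X → X → ℕ) (m : ℕ) (x : X) :
    Monotone (reachSet c m x) := by
  apply monotone_nat_of_le_succ
  intro j
  exact Set.subset_union_left

lemma walk_mem_reachSet (c : X → X → ℕ) (m : ℕ) (x : X) :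
    ∀ (L : List X) (p : X) (j : ℕ), p ∈ reachSet c m x j → walkCost c p L ≤ m →
      L.getLastD p ∈ reachSet c m x (j + L.length) := by
  intro L
  induction L with
  | nil => intro p j hp _; simpa using hp
  | cons y t ih =>
      intro p j hp hcost
      simp only [walkCost] at hcost
      have hy : y ∈ reachSet c m x (j+1) := Or.inr ⟨p, hp, by omega⟩
      have := ih y (j+1) hy (by omega)
      rw [List.getLastD_cons]
      convert this using 2
      simp [List.length_cons]; omega

lemma lemmaA [MetricSpace X] (hud : UniformlyDiscrete X) (hbg : BoundedGeometry X) :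
    ∃ d' : X → X → ℕ,
      (∀ x, d' x x = 0) ∧ (∀ x y, d' x y = d' y x) ∧
      (∀ x y z, d' x z ≤ d' x y + d' y z) ∧
      (∀ x y, x ≠ y → 1 ≤ d' x y) ∧
      (∀ R : ℝ, 0 < R → ∃ S : ℕ, ∀ x y : X, dist x y ≤ R → d' x y ≤ S) ∧
      (∀ m : ℕ, ∃ S : ℝ, 0 < S ∧ ∀ x y : X, d' x y ≤ m → dist x y ≤ S) ∧
      (∀ (x : X) (m : ℕ), {y | d' x y ≤ m}.Finite ∧ {y | d' x y ≤ m}.ncard ≤ gamma0 m) := by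
  classical
  obtain ⟨δ, hδ, hsep⟩ := hud
  have hball : ∀ r : ℕ, ∃ N : ℕ, ∀ x : X,
      (closedBall x (δ * 2^r)).Finite ∧ (closedBall x (δ * 2^r)).ncard ≤ N := by
    intro r
    exact hbg (δ * 2^r) (by positivity)
  choose N hNf using hball
  set D : ℕ → ℕ := fun r => (Finset.range (r+1)).sup N with hDdef
  have hND : ∀ r, N r ≤ D r := fun r => Finset.le_sup (by simp)
  have hDmono : Monotone D := by
    intro a b hab
    exact Finset.sup_mono (Finset.range_subset_range.2 (by omega))
  have hrank : ∀ x y : X, ∃ r : ℕ, dist x y ≤ δ * 2^r := by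
    intro x y
    obtain ⟨r, hr⟩ := pow_unbounded_of_one_lt (dist x y / δ) (y := (2:ℝ)) one_lt_two
    refine ⟨r, ?_⟩
    rw [div_lt_iff₀ hδ] at hr
    nlinarith
  set rank : X → X → ℕ := fun x y => Nat.find (hrank x y) with hrankdef
  have hrank_spec : ∀ x y, dist x y ≤ δ * 2^(rank x y) := fun x y => Nat.find_spec (hrank x y)
  have hrank_min : ∀ x y r, dist x y ≤ δ * 2^r → rank x y ≤ r :=
    fun x y r h => Nat.find_min' (hrank x y) h
  have hrank_symm : ∀ x y, rank x y = rank y x := by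
    intro x y
    apply le_antisymm
    · exact hrank_min x y _ (by rw [dist_comm]; exact hrank_spec y x)
    · exact hrank_min y x _ (by rw [dist_comm]; exact hrank_spec x y)
  set c : X → X → ℕ := fun x y => rank x y + 1 + D (rank x y) with hcdef
  have hcsymm : ∀ a b, c a b = c b a := by
    intro a b; simp only [hcdef, hrank_symm a b]
  have hc1 : ∀ a b, 1 ≤ c a b := by intro a b; simp only [hcdef]; omega
  refine ⟨chainD c, chainD_self c, chainD_symm c hcsymm, chainD_triangle c,
    fun x y h => chainD_pos c hc1 h, ?_, ?_, ?_⟩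
  · -- compression modulus
    intro R hR
    obtain ⟨r, hr⟩ := pow_unbounded_of_one_lt (R / δ) (y := (2:ℝ)) one_lt_two
    have hRr : R ≤ δ * 2^r := by
      rw [div_lt_iff₀ hδ] at hr; nlinarith
    refine ⟨r + 1 + D r, ?_⟩
    intro x y hxy
    have h1 : rank x y ≤ r := hrank_min x y r (hxy.trans hRr)
    have h2 : c x y ≤ r + 1 + D r := by
      have := hDmono h1
      simp only [hcdef]; omega
    exact le_trans (chainD_le c (L := [y]) rfl) (by simpa [walkCost] using h2)
  · -- expansion modulus
    intro m
    refine ⟨m * (δ * 2^m) + 1, by positivity, ?_⟩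
    intro x y hm
    have key : ∀ (L : List X) (x : X), walkCost c x L ≤ m →
        dist x (L.getLastD x) ≤ (L.length : ℝ) * (δ * 2^m) := by
      intro L
      induction L with
      | nil => intro x _; simp
      | cons z t ih =>
          intro x hcost
          simp only [walkCost] at hcost
          have hczx : c x z ≤ m := by omega
          have hrxz : rank x z ≤ m := by simp only [hcdef] at hczx; omega
          have hdxz : dist x z ≤ δ * 2^m := by
            refine (hrank_spec x z).trans ?_
            have : (2:ℝ)^(rank x z) ≤ 2^m := by
              apply pow_le_pow_right₀ one_le_two hrxz
            nlinarith
          have ht : walkCost c z t ≤ m := by omega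
          have := ih z ht
          rw [List.getLastD_cons]
          calc dist x (t.getLastD z) ≤ dist x z + dist z (t.getLastD z) := dist_triangle _ _ _
            _ ≤ δ * 2^m + (t.length : ℝ) * (δ * 2^m) := by linarith
            _ = ((t.length + 1 : ℕ) : ℝ) * (δ * 2^m) := by push_cast; ring
            _ = (((z :: t).length : ℕ) : ℝ) * (δ * 2^m) := by norm_num
    obtain ⟨L, hL, hLcost⟩ := chainD_exists_walk c x y
    have hcost : walkCost c x L ≤ m := by omega
    have hlen : L.length ≤ m := le_trans (length_le_walkCost c hc1 L x) hcost
    have := key L x hcost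
    rw [hL] at this
    have : dist x y ≤ (m : ℝ) * (δ * 2^m) := by
      refine this.trans ?_
      apply mul_le_mul_of_nonneg_right _ (by positivity)
      exact_mod_cast hlen
    linarith
  · -- growth bound
    intro x m
    -- hop sets
    have hop : ∀ p : X, {q | c p q ≤ m}.Finite ∧ {q | c p q ≤ m}.ncard ≤ m := by
      intro p
      by_cases hD0 : D 0 ≤ m
      · set rstar := Nat.findGreatest (fun r => D r ≤ m) m with hrstar
        have hDs : D rstar ≤ m := Nat.findGreatest_spec (P := fun r => D r ≤ m) (Nat.zero_le m) hD0
        have hsub : {q | c p q ≤ m} ⊆ closedBall p (δ * 2^rstar) := by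
          intro q hq
          simp only [Set.mem_setOf_eq, hcdef] at hq
          have h1 : rank p q ≤ m := by omega
          have h2 : D (rank p q) ≤ m := by omega
          have h3 : rank p q ≤ rstar := Nat.le_findGreatest h1 h2
          have : dist p q ≤ δ * 2^rstar := by
            refine (hrank_spec p q).trans ?_
            have : (2:ℝ)^(rank p q) ≤ 2^rstar := pow_le_pow_right₀ one_le_two h3
            nlinarith
          exact mem_closedBall.2 (by rw [dist_comm]; exact this)
        refine ⟨(hNf rstar p).1.subset hsub, ?_⟩
        calc {q | c p q ≤ m}.ncard ≤ (closedBall p (δ * 2^rstar)).ncard :=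
              Set.ncard_le_ncard hsub (hNf rstar p).1
          _ ≤ N rstar := (hNf rstar p).2
          _ ≤ D rstar := hND rstar
          _ ≤ m := hDs
      · have : {q | c p q ≤ m} = ∅ := by
          ext q
          simp only [Set.mem_setOf_eq, Set.mem_empty_iff_false, iff_false, not_le, hcdef]
          have := hDmono (Nat.zero_le (rank p q))
          omega
        rw [this]; simp
    -- reach sets are finite with controlled cardinality
    have hreach : ∀ j : ℕ, (reachSet c m x j).Finite ∧ (reachSet c m x j).ncard ≤ (m+1)^j := by
      intro j
      induction j with
      | zero => constructor <;> simp [reachSet]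
      | succ j ih =>
          obtain ⟨hfin, hcard⟩ := ih
          have hunion : {q | ∃ p ∈ reachSet c m x j, c p q ≤ m} =
              ⋃ p ∈ reachSet c m x j, {q | c p q ≤ m} := by
            ext q; simp
          have hfin2 : {q | ∃ p ∈ reachSet c m x j, c p q ≤ m}.Finite := by
            rw [hunion]
            exact Set.Finite.biUnion hfin (fun p _ => (hop p).1)
          have hcard2 : {q | ∃ p ∈ reachSet c m x j, c p q ≤ m}.ncard ≤ (m+1)^j * m := by
            rw [hunion]
            -- convert to Finset computation
            classical
            have : (⋃ p ∈ reachSet c m x j, {q | c p q ≤ m}) =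
                ↑(hfin.toFinset.biUnion (fun p => (hop p).1.toFinset)) := by
              ext q
              simp [Set.Finite.mem_toFinset]
            rw [this, Set.ncard_coe_finset]
            calc (hfin.toFinset.biUnion (fun p => (hop p).1.toFinset)).card
                ≤ ∑ p ∈ hfin.toFinset, ((hop p).1.toFinset).card := Finset.card_biUnion_le
              _ ≤ hfin.toFinset.card * m := by
                  apply Finset.sum_le_card_nsmul
                  intro p _
                  have := (hop p).2
                  rwa [Set.ncard_eq_toFinset_card _ (hop p).1] at this
              _ ≤ (m+1)^j * m := by
                  apply Nat.mul_le_mul_right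
                  have : hfin.toFinset.card = (reachSet c m x j).ncard := by
                    rw [Set.ncard_eq_toFinset_card _ hfin]
                  omega
          constructor
          · exact (hfin.union hfin2)
          · calc (reachSet c m x (j+1)).ncard
                ≤ (reachSet c m x j).ncard + {q | ∃ p ∈ reachSet c m x j, c p q ≤ m}.ncard :=
                  Set.ncard_union_le _ _
              _ ≤ (m+1)^j + (m+1)^j * m := by omega
              _ = (m+1)^(j+1) := by ring
    have hsub : {y | chainD c x y ≤ m} ⊆ reachSet c m x m := by
      intro y hy
      simp only [Set.mem_setOf_eq] at hy
      obtain ⟨L, hL, hLcost⟩ := chainD_exists_walk c x y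
      have hcost : walkCost c x L ≤ m := by omega
      have hlen : L.length ≤ m := le_trans (length_le_walkCost c hc1 L x) hcost
      have hx0 : x ∈ reachSet c m x 0 := by simp [reachSet]
      have := walk_mem_reachSet c m x L x 0 hx0 hcost
      rw [hL] at this
      exact reachSet_mono c m x (by omega) this
    refine ⟨(hreach m).1.subset hsub, ?_⟩
    calc {y | chainD c x y ≤ m}.ncard ≤ (reachSet c m x m).ncard :=
          Set.ncard_le_ncard hsub (hreach m).1
      _ ≤ (m+1)^m := (hreach m).2
      _ ≤ gamma0 m := by
          calc (m+1)^m ≤ (m+2)^m := Nat.pow_le_pow_left (by omega) _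
            _ ≤ (m+2)^(m+2) := Nat.pow_le_pow_right (by omega) (by omega)

/-! ### The universal coarse disjoint union `Zsp` -/

def IsPieceMat (n : ℕ) (D : ℕ → ℕ → ℕ) : Prop :=
  (∀ i j, n ≤ i ∨ n ≤ j → D i j = 0) ∧
  (∀ i, D i i = 0) ∧
  (∀ i j, D i j = D j i) ∧
  (∀ i j k, i < n → j < n → k < n → D i k ≤ D i j + D j k) ∧
  (∀ i j, i < n → j < n → i ≠ j → 1 ≤ D i j) ∧
  (∀ i m, i < n → ((Finset.range n).filter (fun j => D i j ≤ m)).card ≤ gamma0 m)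

def PieceIdx : Type := {p : ℕ × (ℕ → ℕ → ℕ) // IsPieceMat p.1 p.2}

instance : Countable PieceIdx := by
  have hinj : Function.Injective
      (fun p : PieceIdx => (⟨p.1.1, fun i j : Fin p.1.1 => p.1.2 i j⟩ :
        Σ n : ℕ, (Fin n → Fin n → ℕ))) := by
    rintro ⟨⟨n, D⟩, hD⟩ ⟨⟨n', D'⟩, hD'⟩ h
    simp only [Sigma.mk.inj_iff] at h
    obtain ⟨h1, h2⟩ := h
    subst h1
    have h2' := eq_of_heq h2
    have hDD : D = D' := by
      funext i j
      by_cases hi : i < n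
      · by_cases hj : j < n
        · exact congrFun (congrFun h2' ⟨i, hi⟩) ⟨j, hj⟩
        · exact (hD.1 i j (Or.inr (le_of_not_gt hj))).trans
            (hD'.1 i j (Or.inr (le_of_not_gt hj))).symm
      · exact (hD.1 i j (Or.inl (le_of_not_gt hi))).trans
          (hD'.1 i j (Or.inl (le_of_not_gt hi))).symm
    exact Subtype.ext (by subst hDD; rfl)
  exact hinj.countable

noncomputable def pidx : PieceIdx → ℕ := (Countable.exists_injective_nat PieceIdx).choose

lemma pidx_inj : Function.Injective pidx := (Countable.exists_injective_nat PieceIdx).choose_spec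

/-- diameter of a piece -/
def diamP (p : PieceIdx) : ℕ :=
  (Finset.range p.1.1).sup fun i => (Finset.range p.1.1).sup fun j => p.1.2 i j

lemma le_diamP (p : PieceIdx) {i j : ℕ} (hi : i < p.1.1) (hj : j < p.1.1) :
    p.1.2 i j ≤ diamP p :=
  le_trans (Finset.le_sup (f := fun j => p.1.2 i j) (Finset.mem_range.2 hj))
    (Finset.le_sup (f := fun i => (Finset.range p.1.1).sup fun j => p.1.2 i j)
      (Finset.mem_range.2 hi))

noncomputable def Rad (p : PieceIdx) : ℕ := diamP p + pidx p + 1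

lemma one_le_Rad (p : PieceIdx) : 1 ≤ Rad p := by simp [Rad]

lemma diamP_le_Rad (p : PieceIdx) : diamP p ≤ Rad p := by simp [Rad]; omega

lemma pidx_lt_Rad (p : PieceIdx) : pidx p < Rad p := by simp [Rad]

/-- piece size bound -/
lemma piece_size_le (p : PieceIdx) : p.1.1 ≤ gamma0 (diamP p) := by
  rcases Nat.eq_zero_or_pos p.1.1 with h | h
  · rw [h]; exact Nat.zero_le _
  · have h0 : (0:ℕ) < p.1.1 := h
    have hcard := p.2.2.2.2.2.2 0 (diamP p) h0
    have heq : (Finset.range p.1.1).filter (fun j => p.1.2 0 j ≤ diamP p) =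
        Finset.range p.1.1 := by
      apply Finset.filter_true_of_mem
      intro j hj
      exact le_diamP p h0 (Finset.mem_range.1 hj)
    rw [heq, Finset.card_range] at hcard
    exact hcard

/-- the coarse disjoint union of all `gamma0`-controlled finite integer metric spaces -/
def Zsp : Type := {z : PieceIdx × ℕ // z.2 < z.1.1.1}

def mkZ (p : PieceIdx) (i : ℕ) (h : i < p.1.1) : Zsp := ⟨(p, i), h⟩

open scoped Classical in
noncomputable def zdist (a b : Zsp) : ℝ :=
  if a.1.1 = b.1.1 then ((a.1.1.1.2 a.1.2 b.1.2 : ℕ) : ℝ)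
  else ((Rad a.1.1 + Rad b.1.1 : ℕ) : ℝ)

lemma zdist_same {p : PieceIdx} {i j : ℕ} (hi hj) :
    zdist ⟨(p, i), hi⟩ ⟨(p, j), hj⟩ = ((p.1.2 i j : ℕ) : ℝ) := by
  simp [zdist]

lemma zdist_diff {p q : PieceIdx} {i j : ℕ} (hi hj) (h : p ≠ q) :
    zdist ⟨(p, i), hi⟩ ⟨(q, j), hj⟩ = ((Rad p : ℕ) : ℝ) + ((Rad q : ℕ) : ℝ) := by
  simp only [zdist]
  rw [if_neg h]
  push_cast
  ring

lemma zdist_self (a : Zsp) : zdist a a = 0 := by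
  obtain ⟨⟨p, i⟩, hi⟩ := a
  rw [zdist_same hi hi, p.2.2.1 i]
  norm_num

lemma zdist_comm (a b : Zsp) : zdist a b = zdist b a := by
  obtain ⟨⟨p, i⟩, hi⟩ := a
  obtain ⟨⟨q, j⟩, hj⟩ := b
  by_cases h : p = q
  · subst h
    rw [zdist_same hi hj, zdist_same hj hi, p.2.2.2.1 i j]
  · rw [zdist_diff hi hj h, zdist_diff hj hi (Ne.symm h)]
    ring

lemma Rad_cast_pos (p : PieceIdx) : (0:ℝ) < ((Rad p : ℕ) : ℝ) := by
  have := one_le_Rad p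
  exact_mod_cast Nat.lt_of_lt_of_le Nat.zero_lt_one this

lemma zdist_triangle (a b c : Zsp) : zdist a c ≤ zdist a b + zdist b c := by
  obtain ⟨⟨p, i⟩, hi⟩ := a
  obtain ⟨⟨q, j⟩, hj⟩ := b
  obtain ⟨⟨r, k⟩, hk⟩ := c
  by_cases hpq : p = q
  · subst hpq
    by_cases hpr : p = r
    · subst hpr
      rw [zdist_same hi hk, zdist_same hi hj, zdist_same hj hk]
      have := p.2.2.2.2.1 i j k hi hj hk
      exact_mod_cast this
    · rw [zdist_diff hi hk hpr, zdist_same hi hj, zdist_diff hj hk hpr]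
      have h1 : (0:ℝ) ≤ ((p.1.2 i j : ℕ) : ℝ) := by positivity
      linarith
  · by_cases hqr : q = r
    · subst hqr
      rw [zdist_diff hi hk hpq, zdist_diff hi hj hpq, zdist_same hj hk]
      have h1 : (0:ℝ) ≤ ((q.1.2 j k : ℕ) : ℝ) := by positivity
      linarith
    · by_cases hpr : p = r
      · subst hpr
        rw [zdist_same hi hk, zdist_diff hi hj hpq, zdist_diff hj hk (fun h => hpq h.symm)]
        have h1 : p.1.2 i k ≤ Rad p := le_trans (le_diamP p hi hk) (diamP_le_Rad p)
        have h1' : ((p.1.2 i k : ℕ) : ℝ) ≤ ((Rad p : ℕ) : ℝ) := by exact_mod_cast h1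
        have h2 := Rad_cast_pos q
        linarith
      · rw [zdist_diff hi hk hpr, zdist_diff hi hj hpq, zdist_diff hj hk hqr]
        have h2 := Rad_cast_pos q
        linarith

lemma one_le_zdist {a b : Zsp} (h : a ≠ b) : 1 ≤ zdist a b := by
  obtain ⟨⟨p, i⟩, hi⟩ := a
  obtain ⟨⟨q, j⟩, hj⟩ := b
  by_cases hpq : p = q
  · subst hpq
    have hij : i ≠ j := by
      intro hij
      exact h (by subst hij; rfl)
    have h1 := p.2.2.2.2.2.1 i j hi hj hij
    rw [zdist_same hi hj]
    exact_mod_cast h1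
  · rw [zdist_diff hi hj hpq]
    have h1 : (1:ℝ) ≤ ((Rad p : ℕ) : ℝ) := by exact_mod_cast one_le_Rad p
    have h2 := Rad_cast_pos q
    linarith

lemma zdist_eq_zero {a b : Zsp} (h : zdist a b = 0) : a = b := by
  by_contra hne
  have := one_le_zdist hne
  rw [h] at this
  linarith

noncomputable instance : MetricSpace Zsp :=
  letI : TopologicalSpace Zsp := ⊥
  haveI : DiscreteTopology Zsp := ⟨rfl⟩
  MetricSpace.ofDistTopology zdist zdist_self zdist_comm zdist_triangle
    (fun s => by
      constructor
      · intro _ x hx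
        refine ⟨1/2, by norm_num, fun y hy => ?_⟩
        have hxy : x = y := by
          by_contra hne
          have h1 := one_le_zdist hne
          linarith
        rwa [← hxy]
      · intro _
        exact isOpen_discrete s)
    (fun x y h => zdist_eq_zero h)

lemma zsp_dist_eq (a b : Zsp) : dist a b = zdist a b := rfl

lemma zdist_mk_same (p : PieceIdx) (i j : ℕ) (hi : i < p.1.1) (hj : j < p.1.1) :
    zdist (mkZ p i hi) (mkZ p j hj) = ((p.1.2 i j : ℕ) : ℝ) := zdist_same hi hj

lemma zsp_ud : UniformlyDiscrete Zsp := by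
  refine ⟨1, one_pos, ?_⟩
  intro x y h
  rw [zsp_dist_eq]
  exact one_le_zdist h

lemma zsp_bg : BoundedGeometry Zsp := by
  intro R hR
  refine ⟨gamma0 ⌊R⌋₊ + (⌊R⌋₊ + 1) * gamma0 ⌊R⌋₊, ?_⟩
  rintro ⟨⟨p, i⟩, hi⟩
  show (closedBall (mkZ p i hi) R).Finite ∧ (closedBall (mkZ p i hi) R).ncard ≤ _
  set S1 : Set Zsp := {w | w.1.1 = p ∧ p.1.2 i w.1.2 ≤ ⌊R⌋₊} with hS1
  set S2 : Set Zsp := {w | Rad w.1.1 ≤ ⌊R⌋₊} with hS2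
  have hsub : closedBall (mkZ p i hi) R ⊆ S1 ∪ S2 := by
    rintro ⟨⟨q, j⟩, hj⟩ hw
    replace hw : zdist ⟨(q, j), hj⟩ (mkZ p i hi) ≤ R := hw
    by_cases hpq : q = p
    · subst hpq
      left
      refine ⟨rfl, ?_⟩
      rw [show mkZ q i hi = ⟨(q, i), hi⟩ from rfl, zdist_same hj hi] at hw
      have hsymm : q.1.2 i j = q.1.2 j i := q.2.2.2.1 i j
      rw [hsymm]
      exact Nat.le_floor (by exact_mod_cast hw)
    · right
      rw [show mkZ p i hi = ⟨(p, i), hi⟩ from rfl, zdist_diff hj hi hpq] at hw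
      have h2 := Rad_cast_pos p
      have : ((Rad q : ℕ) : ℝ) ≤ R := by linarith
      exact Nat.le_floor this
  have hS1fin : S1.Finite ∧ S1.ncard ≤ gamma0 ⌊R⌋₊ := by
    have hinj : Set.InjOn (fun w : Zsp => w.1.2) S1 := by
      rintro ⟨⟨q, j⟩, hj⟩ hq ⟨⟨q', j'⟩, hj'⟩ hq' hjj
      simp only [hS1, Set.mem_setOf_eq] at hq hq'
      simp only at hjj
      apply Subtype.ext
      simp only [Prod.mk.injEq]
      exact ⟨hq.1.trans hq'.1.symm, hjj⟩
    have hmap : ∀ w ∈ S1, (fun w : Zsp => w.1.2) w ∈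
        ((Finset.range p.1.1).filter (fun j => p.1.2 i j ≤ ⌊R⌋₊) : Finset ℕ) := by
      rintro ⟨⟨q, j⟩, hj⟩ hq
      simp only [hS1, Set.mem_setOf_eq] at hq
      show j ∈ _
      rw [Finset.mem_filter, Finset.mem_range]
      exact ⟨by simpa [← hq.1] using hj, hq.2⟩
    have himg : (fun w : Zsp => w.1.2) '' S1 ⊆
        ↑((Finset.range p.1.1).filter (fun j => p.1.2 i j ≤ ⌊R⌋₊)) := by
      rintro _ ⟨w, hw, rfl⟩
      exact hmap w hw
    have hfin : S1.Finite :=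
      Set.Finite.of_finite_image ((Finset.finite_toSet _).subset himg) hinj
    refine ⟨hfin, ?_⟩
    calc S1.ncard ≤ (↑((Finset.range p.1.1).filter (fun j => p.1.2 i j ≤ ⌊R⌋₊)) :
          Set ℕ).ncard :=
          Set.ncard_le_ncard_of_injOn _ hmap hinj (Finset.finite_toSet _)
      _ = ((Finset.range p.1.1).filter (fun j => p.1.2 i j ≤ ⌊R⌋₊)).card :=
          Set.ncard_coe_finset _
      _ ≤ gamma0 ⌊R⌋₊ := p.2.2.2.2.2.2 i ⌊R⌋₊ hi
  have hS2fin : S2.Finite ∧ S2.ncard ≤ (⌊R⌋₊ + 1) * gamma0 ⌊R⌋₊ := by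
    have hinj : Set.InjOn (fun w : Zsp => (pidx w.1.1, w.1.2)) S2 := by
      rintro ⟨⟨q, j⟩, hj⟩ _ ⟨⟨q', j'⟩, hj'⟩ _ hjj
      simp only [Prod.mk.injEq] at hjj
      apply Subtype.ext
      simp only [Prod.mk.injEq]
      exact ⟨pidx_inj hjj.1, hjj.2⟩
    have hmap : ∀ w ∈ S2, (fun w : Zsp => (pidx w.1.1, w.1.2)) w ∈
        ((Finset.range (⌊R⌋₊ + 1)) ×ˢ (Finset.range (gamma0 ⌊R⌋₊)) : Finset (ℕ × ℕ)) := by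
      rintro ⟨⟨q, j⟩, hj⟩ hq
      simp only [hS2, Set.mem_setOf_eq] at hq
      show (pidx q, j) ∈ _
      rw [Finset.mem_product, Finset.mem_range, Finset.mem_range]
      constructor
      · have := pidx_lt_Rad q
        have hq' : Rad q ≤ ⌊R⌋₊ := hq
        simp only
        omega
      · have h1 : q.1.1 ≤ gamma0 (diamP q) := piece_size_le q
        have h2 : diamP q ≤ ⌊R⌋₊ := le_trans (diamP_le_Rad q) hq
        have h3 := gamma0_mono h2
        simp only at hj ⊢
        omega
    have himg : (fun w : Zsp => (pidx w.1.1, w.1.2)) '' S2 ⊆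
        ↑((Finset.range (⌊R⌋₊ + 1)) ×ˢ (Finset.range (gamma0 ⌊R⌋₊))) := by
      rintro _ ⟨w, hw, rfl⟩
      exact hmap w hw
    have hfin : S2.Finite :=
      Set.Finite.of_finite_image ((Finset.finite_toSet _).subset himg) hinj
    refine ⟨hfin, ?_⟩
    calc S2.ncard ≤ (↑((Finset.range (⌊R⌋₊ + 1)) ×ˢ (Finset.range (gamma0 ⌊R⌋₊))) :
          Set (ℕ × ℕ)).ncard :=
          Set.ncard_le_ncard_of_injOn _ hmap hinj (Finset.finite_toSet _)
      _ = ((Finset.range (⌊R⌋₊ + 1)) ×ˢ (Finset.range (gamma0 ⌊R⌋₊))).card :=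
          Set.ncard_coe_finset _
      _ = (⌊R⌋₊ + 1) * gamma0 ⌊R⌋₊ := by
          rw [Finset.card_product, Finset.card_range, Finset.card_range]
  constructor
  · exact ((hS1fin.1.union hS2fin.1).subset hsub)
  · calc (closedBall (mkZ p i hi) R).ncard ≤ (S1 ∪ S2).ncard :=
        Set.ncard_le_ncard hsub (hS1fin.1.union hS2fin.1)
      _ ≤ S1.ncard + S2.ncard := Set.ncard_union_le _ _
      _ ≤ gamma0 ⌊R⌋₊ + (⌊R⌋₊ + 1) * gamma0 ⌊R⌋₊ := by
          have := hS1fin.2; have := hS2fin.2; omega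

/-! ### Enumerating a finite subset as a piece -/

section Emb

variable {X : Type}

noncomputable def embFin (s : Finset X) (x0 : X) : ℕ → X := fun i =>
  if h : i < s.card then (s.equivFin.symm ⟨i, h⟩ : X) else x0

open scoped Classical in
noncomputable def embIdx (s : Finset X) : X → ℕ := fun x =>
  if hx : x ∈ s then (s.equivFin ⟨x, hx⟩ : Fin s.card).1 else 0

lemma embIdx_lt {s : Finset X} (hs : 0 < s.card) (x : X) : embIdx s x < s.card := by
  unfold embIdx
  split
  · exact (s.equivFin ⟨x, by assumption⟩).2
  · exact hs

lemma embFin_embIdx (s : Finset X) (x0 : X) {x : X} (hx : x ∈ s) :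
    embFin s x0 (embIdx s x) = x := by
  unfold embFin embIdx
  rw [dif_pos hx, dif_pos ((s.equivFin ⟨x, hx⟩).2)]
  have h1 : (⟨(s.equivFin ⟨x, hx⟩ : Fin s.card).1, (s.equivFin ⟨x, hx⟩).2⟩ : Fin s.card) =
      s.equivFin ⟨x, hx⟩ := Fin.ext rfl
  rw [h1, Equiv.symm_apply_apply]

lemma embFin_mem (s : Finset X) (x0 : X) {i : ℕ} (h : i < s.card) : embFin s x0 i ∈ s := by
  unfold embFin
  rw [dif_pos h]
  exact (s.equivFin.symm ⟨i, h⟩).2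

lemma embFin_injOn (s : Finset X) (x0 : X) {i j : ℕ} (hi : i < s.card) (hj : j < s.card)
    (h : embFin s x0 i = embFin s x0 j) : i = j := by
  unfold embFin at h
  rw [dif_pos hi, dif_pos hj] at h
  have h2 : s.equivFin.symm ⟨i, hi⟩ = s.equivFin.symm ⟨j, hj⟩ := Subtype.ext h
  have h3 := congrArg s.equivFin h2
  rw [Equiv.apply_symm_apply, Equiv.apply_symm_apply] at h3
  exact Fin.mk.injEq .. ▸ (by injection h3)

noncomputable def pieceMat (d' : X → X → ℕ) (s : Finset X) (x0 : X) : ℕ → ℕ → ℕ :=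
  fun i j => if i < s.card ∧ j < s.card then d' (embFin s x0 i) (embFin s x0 j) else 0

lemma pieceMat_isPieceMat (d' : X → X → ℕ) (s : Finset X) (x0 : X)
    (hd0 : ∀ x, d' x x = 0) (hdsymm : ∀ x y, d' x y = d' y x)
    (hdtri : ∀ x y z, d' x z ≤ d' x y + d' y z)
    (hdpos : ∀ x y, x ≠ y → 1 ≤ d' x y)
    (hgrow : ∀ (x : X) (m : ℕ), {y | d' x y ≤ m}.Finite ∧ {y | d' x y ≤ m}.ncard ≤ gamma0 m) :
    IsPieceMat s.card (pieceMat d' s x0) := by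
  classical
  refine ⟨?_, ?_, ?_, ?_, ?_, ?_⟩
  · intro i j hij
    unfold pieceMat
    rw [if_neg (by omega)]
  · intro i
    unfold pieceMat
    split
    · exact hd0 _
    · rfl
  · intro i j
    unfold pieceMat
    by_cases h : i < s.card ∧ j < s.card
    · rw [if_pos h, if_pos (by omega), hdsymm]
    · rw [if_neg h, if_neg (by omega)]
  · intro i j k hi hj hk
    unfold pieceMat
    rw [if_pos ⟨hi, hk⟩, if_pos ⟨hi, hj⟩, if_pos ⟨hj, hk⟩]
    exact hdtri _ _ _
  · intro i j hi hj hij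
    unfold pieceMat
    rw [if_pos ⟨hi, hj⟩]
    refine hdpos _ _ ?_
    intro h
    exact hij (embFin_injOn s x0 hi hj h)
  · intro i m hi
    set T := (Finset.range s.card).filter (fun j => pieceMat d' s x0 i j ≤ m) with hT
    have hTsub : ∀ j ∈ T, d' (embFin s x0 i) (embFin s x0 j) ≤ m := by
      intro j hj
      rw [hT, Finset.mem_filter, Finset.mem_range] at hj
      have := hj.2
      unfold pieceMat at this
      rwa [if_pos ⟨hi, hj.1⟩] at this
    have hinj : Set.InjOn (embFin s x0) ↑T := by
      intro a ha b hb hab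
      rw [hT, Finset.coe_filter] at ha hb
      simp only [Set.mem_setOf_eq, Finset.mem_range] at ha hb
      exact embFin_injOn s x0 ha.1 hb.1 hab
    have hcard : T.card = (T.image (embFin s x0)).card :=
      (Finset.card_image_of_injOn hinj).symm
    have hsub2 : T.image (embFin s x0) ⊆ (hgrow (embFin s x0 i) m).1.toFinset := by
      intro y hy
      rw [Finset.mem_image] at hy
      obtain ⟨j, hj, rfl⟩ := hy
      rw [Set.Finite.mem_toFinset]
      exact hTsub j hj
    calc T.card = (T.image (embFin s x0)).card := hcard
      _ ≤ (hgrow (embFin s x0 i) m).1.toFinset.card := Finset.card_le_card hsub2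
      _ = {y | d' (embFin s x0 i) y ≤ m}.ncard :=
          (Set.ncard_eq_toFinset_card _ (hgrow (embFin s x0 i) m).1).symm
      _ ≤ gamma0 m := (hgrow (embFin s x0 i) m).2

end Emb

end Stmt18Aux

theorem stmt18 :
    (∀ (X : Type) [MetricSpace X], UniformlyDiscrete X → BoundedGeometry X →
      ∃ (G : Type) (iG : Group G) (mG : MetricSpace G),
        @ProperLeftInvariantMetricGroup G iG mG ∧
        ∃ φ : X → G, @IsUniformEmbeddingMap X G inferInstance mG φ)
    ↔
    (∃ (G : Type) (iG : Group G) (mG : MetricSpace G),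
      @ProperLeftInvariantMetricGroup G iG mG ∧
      ∀ (X : Type) [MetricSpace X], UniformlyDiscrete X → BoundedGeometry X →
        ∃ φ : X → G, @IsUniformEmbeddingMap X G inferInstance mG φ) := by
  constructor
  · intro h
    obtain ⟨H, iH, mH, hP, ψ, hψ⟩ := h Stmt18Aux.Zsp Stmt18Aux.zsp_ud Stmt18Aux.zsp_bg
    refine ⟨H, iH, mH, hP, ?_⟩
    intro X mX hud hbg
    classical
    letI := iH
    letI := mH
    obtain ⟨hcnt, hinv, hprop⟩ := hP
    obtain ⟨hψ1, hψ2⟩ := hψ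
    by_cases hne : Nonempty X
    swap
    · refine ⟨fun x => (hne ⟨x⟩).elim, ?_, ?_⟩
      · exact fun R hR => ⟨1, one_pos, fun x y _ => (hne ⟨x⟩).elim⟩
      · exact fun R hR => ⟨1, one_pos, fun x y _ => (hne ⟨x⟩).elim⟩
    obtain ⟨x0⟩ := hne
    obtain ⟨d', hd0, hdsymm, hdtri, hdpos, hcomp, hexp, hgrow⟩ := Stmt18Aux.lemmaA hud hbg
    set F : ℕ → Finset X := fun k => (hgrow x0 k).1.toFinset with hF
    have hmemF : ∀ (k : ℕ) (x : X), d' x0 x ≤ k → x ∈ F k := by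
      intro k x hx
      rw [hF, Set.Finite.mem_toFinset]
      exact hx
    have hx0F : ∀ k : ℕ, x0 ∈ F k := fun k => hmemF k x0 (by rw [hd0 x0]; omega)
    have hcard : ∀ k : ℕ, 0 < (F k).card := fun k => Finset.card_pos.2 ⟨x0, hx0F k⟩
    set piece : ℕ → Stmt18Aux.PieceIdx := fun k =>
      ⟨((F k).card, Stmt18Aux.pieceMat d' (F k) x0),
        Stmt18Aux.pieceMat_isPieceMat d' (F k) x0 hd0 hdsymm hdtri hdpos hgrow⟩ with hpiece
    set pt : ℕ → X → Stmt18Aux.Zsp := fun k x =>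
      Stmt18Aux.mkZ (piece k) (Stmt18Aux.embIdx (F k) x) (Stmt18Aux.embIdx_lt (hcard k) x)
      with hpt
    have hdist : ∀ (k : ℕ) (x y : X), x ∈ F k → y ∈ F k →
        dist (pt k x) (pt k y) = (d' x y : ℝ) := by
      intro k x y hx hy
      have e0 : dist (pt k x) (pt k y) = Stmt18Aux.zdist (pt k x) (pt k y) :=
        Stmt18Aux.zsp_dist_eq _ _
      rw [e0]
      simp only [hpt]
      rw [Stmt18Aux.zdist_mk_same]
      have hix := Stmt18Aux.embIdx_lt (hcard k) x
      have hiy := Stmt18Aux.embIdx_lt (hcard k) y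
      show ((Stmt18Aux.pieceMat d' (F k) x0
        (Stmt18Aux.embIdx (F k) x) (Stmt18Aux.embIdx (F k) y) : ℕ) : ℝ) = _
      unfold Stmt18Aux.pieceMat
      rw [if_pos ⟨hix, hiy⟩, Stmt18Aux.embFin_embIdx _ _ hx, Stmt18Aux.embFin_embIdx _ _ hy]
    set φh : ℕ → X → H := fun k x => (ψ (pt k x0))⁻¹ * ψ (pt k x) with hφh
    have hφdist : ∀ (k : ℕ) (x y : X),
        dist (φh k x) (φh k y) = dist (ψ (pt k x)) (ψ (pt k y)) := by
      intro k x y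
      simp only [hφh]
      exact hinv _ _ _
    have hbound : ∀ x : X, ∃ g : H,
        {k | d' x0 x ≤ k ∧ φh k x = g} ∈ Filter.hyperfilter ℕ := by
      intro x
      obtain ⟨Sx, hSx0, hSx⟩ := hψ1 ((d' x0 x : ℝ) + 1) (by positivity)
      have hmem : ∀ k, d' x0 x ≤ k → φh k x ∈ closedBall (1 : H) Sx := by
        intro k hk
        rw [mem_closedBall]
        have h1 : dist (φh k x) (1 : H) = dist (ψ (pt k x)) (ψ (pt k x0)) := by
          have h2 : (1 : H) = φh k x0 := by simp [hφh]
          rw [h2, hφdist]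
        rw [h1]
        apply hSx
        rw [hdist k x x0 (hmemF k x hk) (hx0F k), hdsymm x x0]
        linarith
      have hA : {k | d' x0 x ≤ k} ∈ Filter.hyperfilter ℕ := by
        apply Filter.hyperfilter_le_cofinite
        rw [Filter.mem_cofinite]
        apply Set.Finite.subset (Set.finite_Iio (d' x0 x))
        intro k hk
        simp only [Set.mem_compl_iff, Set.mem_setOf_eq, not_le] at hk
        simpa using hk
      have hsub : {k | d' x0 x ≤ k} ⊆
          ⋃ g ∈ closedBall (1 : H) Sx, {k | d' x0 x ≤ k ∧ φh k x = g} := by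
        intro k hk
        simp only [Set.mem_iUnion]
        exact ⟨φh k x, hmem k hk, hk, rfl⟩
      have hU : (⋃ g ∈ closedBall (1 : H) Sx, {k | d' x0 x ≤ k ∧ φh k x = g}) ∈
          Filter.hyperfilter ℕ := Filter.mem_of_superset hA hsub
      obtain ⟨g, -, hg⟩ := (Ultrafilter.finite_biUnion_mem_iff (hprop 1 Sx)).1 hU
      exact ⟨g, hg⟩
    choose Φ hΦ using hbound
    have hcommon : ∀ x y : X, ∃ k : ℕ,
        (d' x0 x ≤ k ∧ φh k x = Φ x) ∧ (d' x0 y ≤ k ∧ φh k y = Φ y) := by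
      intro x y
      have hmem := Filter.inter_mem (hΦ x) (hΦ y)
      obtain ⟨k, hk⟩ := Filter.nonempty_of_mem hmem
      exact ⟨k, hk⟩
    refine ⟨Φ, ?_, ?_⟩
    · intro R hR
      obtain ⟨S1, hS1⟩ := hcomp R hR
      obtain ⟨Sψ, hSψ0, hSψ⟩ := hψ1 ((S1 : ℝ) + 1) (by positivity)
      refine ⟨Sψ, hSψ0, ?_⟩
      intro x y hxy
      obtain ⟨k, ⟨hkx, hex⟩, hky, hey⟩ := hcommon x y
      rw [← hex, ← hey, hφdist]
      apply hSψ
      rw [hdist k x y (hmemF k x hkx) (hmemF k y hky)]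
      have h3 := hS1 x y hxy
      have h4 : (d' x y : ℝ) ≤ (S1 : ℝ) := by exact_mod_cast h3
      linarith
    · intro R hR
      obtain ⟨Sψ2, hSψ20, hSψ2⟩ := hψ2 R hR
      obtain ⟨S2, hS20, hS2⟩ := hexp ⌊Sψ2⌋₊
      refine ⟨S2, hS20, ?_⟩
      intro x y hxy
      obtain ⟨k, ⟨hkx, hex⟩, hky, hey⟩ := hcommon x y
      apply hS2
      have h1 : dist (ψ (pt k x)) (ψ (pt k y)) ≤ R := by
        rw [← hφdist k x y, hex, hey]
        exact hxy
      have h2 := hSψ2 _ _ h1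
      rw [hdist k x y (hmemF k x hkx) (hmemF k y hky)] at h2
      exact Nat.le_floor h2
  · rintro ⟨G, iG, mG, hP, hAll⟩ X mX hud hbg
    exact ⟨G, iG, mG, hP, hAll X hud hbg⟩
end
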